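/- arXiv:2403.05013 — 2 statements merged into one kernel-verified Lean document; each statement's English description precedes it below -/
import Mathlib

section
/- Let q = 2^m > 2, let U be an orthogonal Buekenhout–Metz unital in PG(2, q²) with special point T_∞ = (0,1,0), and suppose F is a set of 7 points of U together with 7 lines forming a Fano plane (each line meets F in exactly 3 points, every two points of F lie on one of the 7 lines). Then T_∞ ∉ F. -/
/-!
If `T∞` is one of the seven points, the three Fano lines through it are vertical, so they pair
up the other six points by their `x`-coordinate. Take a pair `{A, B}` and a point `C` off it, let
`E` be the third point of `AC` and `D` the third point of `BE`; counting `x`-values shows that `D`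
is the partner of `C`, so these lines form an O'Nan configuration through `T∞`. Subtracting the two
collinearity conditions gives `x_A - x_E = μ (x_C - x_E)` with `μ ∈ 𝔽_q`. So `A`, `C`, `E` lie
over an `𝔽_q`-line `x_E + 𝔽_q u`, and collinearity there forces `f(u) = a u² + b u^{q+1} ∈ 𝔽_q`.
For an orthogonal unital this is impossible. With `z = u^{q-1}` and `t = a^q z / (b + b^q)`,
`f(u) ∈ 𝔽_q` becomes `t² + t = d`. Since `d` has trace `0`, `t ∈ 𝔽_q`, and then `z^{q+1} = 1`
gives `t² = d`, i.e. `t = 0`.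
-/

open Finset

lemma Finset.exists_mem_ne_ne {α : Type*} [DecidableEq α] {s : Finset α} (hs : 2 < #s)
    (a b : α) : ∃ c ∈ s, c ≠ a ∧ c ≠ b := by
  obtain ⟨c, hc, hcb⟩ := exists_mem_ne (s := s.erase a)
    (lt_of_lt_of_le (by omega) (pred_card_le_card_erase (a := a))) b
  exact ⟨c, mem_of_mem_erase hc, ne_of_mem_erase hc, hcb⟩

lemma Finset.eq_or_eq_or_eq_of_card_eq_three {α : Type*} [DecidableEq α] {s : Finset α}
    (hs : #s = 3) {a b c d : α} (ha : a ∈ s) (hb : b ∈ s) (hc : c ∈ s) (hab : a ≠ b)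
    (hac : a ≠ c) (hbc : b ≠ c) (hd : d ∈ s) : d = a ∨ d = b ∨ d = c := by
  have habc : {a, b, c} = s := eq_of_subset_of_card_le (by simp [insert_subset_iff, *])
    (by rw [hs, card_eq_three.2 ⟨a, b, c, hab, hac, hbc, rfl⟩])
  simpa [← habc] using hd

lemma sum_range_pow_sub_self_pow {R : Type*} [CommRing R] {p : ℕ} [ExpChar R p] (t : R)
    (m : ℕ) : ∑ i ∈ range m, (t ^ p - t) ^ p ^ i = t ^ p ^ m - t := by
  have hterm (i : ℕ) : (t ^ p - t) ^ p ^ i = t ^ p ^ (i + 1) - t ^ p ^ i := by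
    rw [sub_pow_expChar_pow, ← pow_mul, ← pow_succ']
  simp only [hterm, sum_range_sub (fun i => t ^ p ^ i), pow_zero, pow_one]

section Fano

variable {α β γ : Type*} [Fintype α] [DecidableEq α] [DecidableEq γ]
  {Inc : β → α → Prop} [∀ i, DecidablePred (Inc i)] {X : α → γ} {o : α}

lemma card_filter_erase_eq_two (hline : ∀ i, #{j | Inc i j} = 3)
    (hjoin : ∀ j k, j ≠ k → ∃ i, Inc i j ∧ Inc i k)
    (hvert : ∀ i j k, Inc i o → Inc i j → j ≠ o → k ≠ o → (Inc i k ↔ X k = X j))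
    (j : α) (hj : j ≠ o) : #{k ∈ univ.erase o | X k = X j} = 2 := by
  obtain ⟨i, hio, hij⟩ := hjoin o j hj.symm
  have hfibre : {k ∈ univ.erase o | X k = X j} = (univ.filter (Inc i)).erase o := by
    ext k
    simp only [mem_filter, mem_erase, mem_univ, and_true, true_and, and_congr_right_iff]
    exact fun hk => (hvert i j k hio hij hj hk).symm
  rw [hfibre, card_erase_of_mem (by simpa using hio), hline]

lemma card_image_erase_eq_three (hcard : Fintype.card α = 7)
    (hfibre : ∀ j, j ≠ o → #{k ∈ univ.erase o | X k = X j} = 2) :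
    #((univ.erase o).image X) = 3 := by
  have h := card_eq_sum_card_image X (univ.erase o)
  rw [sum_congr rfl (g := fun _ => 2) fun v hv => ?_, card_erase_of_mem (mem_univ o), card_univ,
    hcard, sum_const, smul_eq_mul] at h
  · omega
  · obtain ⟨j, hj, rfl⟩ := mem_image.1 hv
    exact hfibre j (ne_of_mem_erase hj)

/-- `o` plays `T∞` and `X` the `x`-coordinate: the lines through `o` are the vertical ones. -/
theorem exists_onan_of_fano (hcard : Fintype.card α = 7)
    (hline : ∀ i, #{j | Inc i j} = 3)
    (hjoin : ∀ j k, j ≠ k → ∃ i, Inc i j ∧ Inc i k)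
    (hvert : ∀ i j k, Inc i o → Inc i j → j ≠ o → k ≠ o → (Inc i k ↔ X k = X j))
    (hnonvert : ∀ i j k, ¬ Inc i o → Inc i j → Inc i k → j ≠ k → X j ≠ X k)
    (huniq : ∀ i i' j k, j ≠ o → k ≠ o → X j ≠ X k →
      Inc i j → Inc i k → Inc i' j → Inc i' k → i = i') :
    ∃ (A B C D E : α) (i i' : β), A ≠ B ∧ C ≠ D ∧ X A = X B ∧ X C = X D ∧ X A ≠ X C ∧
      X E ≠ X C ∧ ¬ Inc i o ∧ ¬ Inc i' o ∧ Inc i A ∧ Inc i C ∧ Inc i E ∧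
      Inc i' B ∧ Inc i' D ∧ Inc i' E := by
  have hfibre := card_filter_erase_eq_two hline hjoin hvert
  have himage := card_image_erase_eq_three hcard hfibre
  have third (i : β) (j k : α) : ∃ l, Inc i l ∧ l ≠ j ∧ l ≠ k := by
    obtain ⟨l, hl, hlj, hlk⟩ := exists_mem_ne_ne (by rw [hline i]; omega) j k
    exact ⟨l, (mem_filter.1 hl).2, hlj, hlk⟩
  have ne_o {i : β} {j : α} (hio : ¬ Inc i o) (hij : Inc i j) : j ≠ o := by
    rintro rfl; exact hio hij
  obtain ⟨A, hA⟩ := Fintype.exists_ne_of_one_lt_card (by omega) o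
  obtain ⟨B, hB, hBA, hXB⟩ : ∃ B, B ≠ o ∧ B ≠ A ∧ X B = X A := by
    obtain ⟨B, hB, hBA⟩ := exists_mem_ne (by rw [hfibre A hA]; omega) A
    simp only [mem_filter, mem_erase, mem_univ, and_true] at hB
    exact ⟨B, hB.1, hBA, hB.2⟩
  obtain ⟨C, hC, hXC⟩ : ∃ C, C ≠ o ∧ X C ≠ X A := by
    obtain ⟨v, hv, hvA⟩ := exists_mem_ne (s := (univ.erase o).image X) (by omega) (X A)
    obtain ⟨C, hC, rfl⟩ := mem_image.1 hv
    exact ⟨C, ne_of_mem_erase hC, hvA⟩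
  obtain ⟨i, hiA, hiC⟩ := hjoin A C (by rintro rfl; exact hXC rfl)
  have hio : ¬ Inc i o := fun h => hXC ((hvert i A C h hiA hA hC).1 hiC)
  obtain ⟨E, hiE, hEA, hEC⟩ := third i A C
  have hXEA : X E ≠ X A := hnonvert i E A hio hiE hiA hEA
  have hXEC : X E ≠ X C := hnonvert i E C hio hiE hiC hEC
  obtain ⟨i', hi'B, hi'E⟩ := hjoin B E (by rintro rfl; exact hXEA hXB)
  have hi'o : ¬ Inc i' o := fun h =>
    hXEA (((hvert i' B E h hi'B hB (ne_o hio hiE)).1 hi'E).trans hXB)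
  obtain ⟨D, hi'D, hDB, hDE⟩ := third i' B E
  have hXDA : X D ≠ X A := hXB ▸ hnonvert i' D B hi'o hi'D hi'B hDB
  have hXDE : X D ≠ X E := hnonvert i' D E hi'o hi'D hi'E hDE
  have hXD : X D = X C := by
    have hmem {j : α} (hj : j ≠ o) : X j ∈ (univ.erase o).image X :=
      mem_image_of_mem X (mem_erase.2 ⟨hj, mem_univ j⟩)
    rcases eq_or_eq_or_eq_of_card_eq_three himage (hmem hA) (hmem hC) (hmem (ne_o hio hiE))
      hXC.symm hXEA.symm hXEC.symm (hmem (ne_o hi'o hi'D)) with h | h | h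
    · exact absurd h hXDA
    · exact h
    · exact absurd h hXDE
  have hDC : D ≠ C := by
    rintro rfl
    obtain rfl := huniq i i' D E hC (ne_o hio hiE) hXEC.symm hiC hiE hi'D hi'E
    exact hnonvert i A B hio hiA hi'B hBA.symm hXB.symm
  exact ⟨A, B, C, D, E, i, i', hBA.symm, hDC.symm, hXB.symm, hXD.symm, hXC.symm, hXEC, hio, hi'o,
    hiA, hiC, hiE, hi'B, hi'D, hi'E⟩

end Fano

section ProjectivePlane

variable {K : Type*} [Field K]

def AffCollinear (P Q R : K × K) : Prop :=
  (Q.1 - P.1) * (R.2 - P.2) = (R.1 - P.1) * (Q.2 - P.2)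

def IsOnLine (L : Fin 3 → K) (P : K × K) : Prop := L 0 * P.1 + L 1 * P.2 + L 2 = 0

lemma sum_mul_smul_vecCons_eq_zero_iff (L : Fin 3 → K) {c : K} (hc : c ≠ 0) (x y z : K) :
    ∑ t, L t * (c • ![x, y, z]) t = 0 ↔ L 0 * x + L 1 * y + L 2 * z = 0 := by
  have h : ∑ t, L t * (c • ![x, y, z]) t = c * (L 0 * x + L 1 * y + L 2 * z) := by
    simp only [Fin.sum_univ_three, Pi.smul_apply, smul_eq_mul, Matrix.cons_val_zero,
      Matrix.cons_val_one, Matrix.cons_val_two, Matrix.head_cons, Matrix.tail_cons]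
    ring
  rw [h, mul_eq_zero, or_iff_right hc]

variable {L L' : Fin 3 → K} {P Q R : K × K}

lemma IsOnLine.fst_eq_iff (hL : L ≠ 0) (h1 : L 1 = 0) (hP : IsOnLine L P) :
    IsOnLine L Q ↔ Q.1 = P.1 := by
  unfold IsOnLine at *
  have h0 : L 0 ≠ 0 := by
    intro h0
    apply hL
    ext t
    fin_cases t
    · exact h0
    · exact h1
    · simpa [h0, h1] using hP
  constructor <;> intro h
  · exact mul_left_cancel₀ h0 (by linear_combination h - hP - (Q.2 - P.2) * h1)
  · linear_combination hP + L 0 * h + (Q.2 - P.2) * h1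

lemma IsOnLine.eq_of_fst_eq (h1 : L 1 ≠ 0) (hP : IsOnLine L P) (hQ : IsOnLine L Q)
    (h : P.1 = Q.1) : P = Q := by
  refine Prod.ext h (mul_left_cancel₀ h1 ?_)
  unfold IsOnLine at hP hQ
  linear_combination hP - hQ - L 0 * h

lemma IsOnLine.affCollinear (h1 : L 1 ≠ 0) (hP : IsOnLine L P) (hQ : IsOnLine L Q)
    (hR : IsOnLine L R) : AffCollinear P Q R := by
  unfold IsOnLine at hP hQ hR
  apply mul_left_cancel₀ h1
  linear_combination (Q.1 - P.1) * (hR - hP) - (R.1 - P.1) * (hQ - hP)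

lemma IsOnLine.exists_eq_smul (hL : L ≠ 0) (hL' : L' ≠ 0) (hPQ : P.1 ≠ Q.1)
    (hP : IsOnLine L P) (hQ : IsOnLine L Q) (hP' : IsOnLine L' P) (hQ' : IsOnLine L' Q) :
    ∃ c : K, c ≠ 0 ∧ L = c • L' := by
  have h1 : L 1 ≠ 0 := fun h => hPQ ((hP.fst_eq_iff hL h).1 hQ).symm
  have h1' : L' 1 ≠ 0 := fun h => hPQ ((hP'.fst_eq_iff hL' h).1 hQ').symm
  unfold IsOnLine at hP hQ hP' hQ'
  have h0 : L 0 * L' 1 = L 1 * L' 0 := by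
    apply mul_left_cancel₀ (sub_ne_zero.2 hPQ)
    linear_combination L' 1 * (hP - hQ) - L 1 * (hP' - hQ')
  refine ⟨L 1 / L' 1, div_ne_zero h1 h1', ?_⟩
  ext t
  fin_cases t <;> simp only [Fin.zero_eta, Fin.mk_one, Fin.reduceFinMk, Pi.smul_apply,
    smul_eq_mul] <;> field_simp
  · linear_combination h0
  · linear_combination L' 1 * hP - L 1 * hP' - P.1 * h0

theorem exists_onan_of_fano_through_point_at_infinity {α β : Type*} [Fintype α] [DecidableEq α]
    [DecidableEq K] (P : α → Fin 3 → K) (L : β → Fin 3 → K) (hcard : Fintype.card α = 7)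
    (hL0 : ∀ i, L i ≠ 0)
    (hPdist : ∀ j j' : α, (∃ c : K, c ≠ 0 ∧ P j = c • P j') → j = j')
    (hLdist : ∀ i i' : β, (∃ c : K, c ≠ 0 ∧ L i = c • L i') → i = i')
    (hline3 : ∀ i, #{j | ∑ t, L i t * P j t = 0} = 3)
    (hcover : ∀ j j', j ≠ j' → ∃ i, (∑ t, L i t * P j t = 0) ∧ (∑ t, L i t * P j' t = 0))
    {j₀ : α} {c₀ : K} (hc₀ : c₀ ≠ 0) (hPj₀ : P j₀ = c₀ • ![0, 1, 0])
    (c : α → K) (pt : α → K × K) (hc : ∀ j, c j ≠ 0)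
    (hP : ∀ j, j ≠ j₀ → P j = c j • ![(pt j).1, (pt j).2, 1]) :
    ∃ A B C D E : α, (pt A).1 = (pt B).1 ∧ (pt C).1 = (pt D).1 ∧ pt A ≠ pt B ∧ pt C ≠ pt D ∧
      (pt A).1 ≠ (pt C).1 ∧ (pt E).1 ≠ (pt C).1 ∧
      AffCollinear (pt E) (pt A) (pt C) ∧ AffCollinear (pt E) (pt B) (pt D) := by
  have hinc₀ (i : β) : (∑ t, L i t * P j₀ t = 0) ↔ L i 1 = 0 := by
    rw [hPj₀, sum_mul_smul_vecCons_eq_zero_iff _ hc₀]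
    simp
  have hinc (i : β) {j : α} (hj : j ≠ j₀) :
      (∑ t, L i t * P j t = 0) ↔ IsOnLine (L i) (pt j) := by
    rw [hP j hj, sum_mul_smul_vecCons_eq_zero_iff _ (hc j), mul_one]
    rfl
  have hpt {j k : α} (hj : j ≠ j₀) (hk : k ≠ j₀) (h : pt j = pt k) : j = k :=
    hPdist j k ⟨c j / c k, div_ne_zero (hc j) (hc k), by
      rw [hP j hj, hP k hk, smul_smul, div_mul_cancel₀ _ (hc k), h]⟩
  have ne₀ {i : β} {j : α} (hio : ¬ ∑ t, L i t * P j₀ t = 0) (hij : ∑ t, L i t * P j t = 0) :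
      j ≠ j₀ := by
    rintro rfl
    exact hio hij
  have hcol {i : β} {j k l : α} (hio : ¬ ∑ t, L i t * P j₀ t = 0)
      (hij : ∑ t, L i t * P j t = 0) (hik : ∑ t, L i t * P k t = 0)
      (hil : ∑ t, L i t * P l t = 0) : AffCollinear (pt j) (pt k) (pt l) :=
    IsOnLine.affCollinear ((hinc₀ i).not.1 hio) ((hinc i (ne₀ hio hij)).1 hij)
      ((hinc i (ne₀ hio hik)).1 hik) ((hinc i (ne₀ hio hil)).1 hil)
  obtain ⟨A, B, C, D, E, i, i', hAB, hCD, hXAB, hXCD, hXAC, hXEC, hio, hi'o, hiA, hiC, hiE,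
      hi'B, hi'D, hi'E⟩ :=
    exists_onan_of_fano (X := fun j => (pt j).1) hcard hline3 hcover
      (fun i j k hio hij hj hk => by
        rw [hinc i hj] at hij
        rw [hinc i hk]
        exact hij.fst_eq_iff (hL0 i) ((hinc₀ i).1 hio))
      (fun i j k hio hij hik hjk hx => hjk <| hpt (ne₀ hio hij) (ne₀ hio hik) <|
        ((hinc i (ne₀ hio hij)).1 hij).eq_of_fst_eq ((hinc₀ i).not.1 hio)
          ((hinc i (ne₀ hio hik)).1 hik) hx)
      (fun i i' j k hj hk hx hij hik hi'j hi'k => hLdist i i' <|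
        IsOnLine.exists_eq_smul (hL0 i) (hL0 i') hx ((hinc i hj).1 hij) ((hinc i hk).1 hik)
          ((hinc i' hj).1 hi'j) ((hinc i' hk).1 hi'k))
  exact ⟨A, B, C, D, E, hXAB, hXCD, fun h => hAB (hpt (ne₀ hio hiA) (ne₀ hi'o hi'B) h),
    fun h => hCD (hpt (ne₀ hio hiC) (ne₀ hi'o hi'D) h), hXAC, hXEC, hcol hio hiE hiA hiC,
    hcol hi'o hi'E hi'B hi'D⟩

end ProjectivePlane

section BuekenhoutMetz

variable {K : Type*} [Field K]

/-- `U_{a,b}` consists of `T∞ = (0 : 1 : 0)` and the points `(x : bmForm a b q x + r : 1)`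
with `r ∈ 𝔽_q`. -/
def bmForm (a b : K) (q : ℕ) (x : K) : K := a * x ^ 2 + b * x ^ (q + 1)

variable {p m : ℕ} [ExpChar K p]

lemma bmForm_add_mul (a b : K) {s : K} (hs : s ^ p ^ m = s) (x u : K) :
    bmForm a b (p ^ m) (x + s * u) = bmForm a b (p ^ m) x
      + s * (2 * a * x * u + b * (x * u ^ p ^ m + u * x ^ p ^ m))
      + s ^ 2 * bmForm a b (p ^ m) u := by
  simp only [bmForm, pow_succ _ (p ^ m), add_pow_expChar_pow, mul_pow, hs]
  ring

lemma bmForm_pow_eq_self_of_affCollinear (a b : K) {x u s₁ s₂ r₀ r₁ r₂ : K} (hu : u ≠ 0)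
    (hs₁ : s₁ ≠ 0) (hs₂ : s₂ ≠ 0) (hs : s₁ ≠ s₂) (hs₁q : s₁ ^ p ^ m = s₁)
    (hs₂q : s₂ ^ p ^ m = s₂) (hr₀ : r₀ ^ p ^ m = r₀) (hr₁ : r₁ ^ p ^ m = r₁)
    (hr₂ : r₂ ^ p ^ m = r₂)
    (hcol : AffCollinear (x, bmForm a b (p ^ m) x + r₀)
      (x + s₁ * u, bmForm a b (p ^ m) (x + s₁ * u) + r₁)
      (x + s₂ * u, bmForm a b (p ^ m) (x + s₂ * u) + r₂)) :
    bmForm a b (p ^ m) u ^ p ^ m = bmForm a b (p ^ m) u := by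
  have hden : s₁ * s₂ * (s₂ - s₁) ≠ 0 := mul_ne_zero (mul_ne_zero hs₁ hs₂) (sub_ne_zero.2 hs.symm)
  have key : bmForm a b (p ^ m) u = (s₂ * (r₁ - r₀) - s₁ * (r₂ - r₀)) / (s₁ * s₂ * (s₂ - s₁)) := by
    rw [eq_div_iff hden]
    simp only [AffCollinear, bmForm_add_mul a b hs₁q, bmForm_add_mul a b hs₂q] at hcol
    apply mul_left_cancel₀ hu
    linear_combination hcol
  rw [key, div_pow]
  simp only [sub_pow_expChar_pow, mul_pow, hs₁q, hs₂q, hr₀, hr₁, hr₂]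

theorem exists_bmForm_pow_eq_self_of_onan (a b : K) {x₁ x₂ x₃ r₁ r₂ r₃ r₄ r₅ : K}
    (hr₁ : r₁ ^ p ^ m = r₁) (hr₂ : r₂ ^ p ^ m = r₂) (hr₃ : r₃ ^ p ^ m = r₃)
    (hr₄ : r₄ ^ p ^ m = r₄) (hr₅ : r₅ ^ p ^ m = r₅)
    (hx₁₂ : x₁ ≠ x₂) (hx₃₂ : x₃ ≠ x₂) (hr₁₂ : r₁ ≠ r₂) (hr₃₄ : r₃ ≠ r₄)
    (hACE : AffCollinear (x₃, bmForm a b (p ^ m) x₃ + r₅) (x₁, bmForm a b (p ^ m) x₁ + r₁)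
      (x₂, bmForm a b (p ^ m) x₂ + r₃))
    (hBDE : AffCollinear (x₃, bmForm a b (p ^ m) x₃ + r₅) (x₁, bmForm a b (p ^ m) x₁ + r₂)
      (x₂, bmForm a b (p ^ m) x₂ + r₄)) :
    ∃ u ≠ 0, bmForm a b (p ^ m) u ^ p ^ m = bmForm a b (p ^ m) u := by
  obtain ⟨u, rfl⟩ : ∃ u, x₂ = x₃ + u := ⟨x₂ - x₃, by ring⟩
  set μ := (r₁ - r₂) / (r₃ - r₄) with hμ
  have hx₁ : x₁ = x₃ + μ * u := by
    have h : (x₁ - x₃) * (r₃ - r₄) = u * (r₁ - r₂) := by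
      simp only [AffCollinear] at hACE hBDE
      linear_combination hACE - hBDE
    rw [hμ]
    field_simp [sub_ne_zero.2 hr₃₄]
    linear_combination h
  subst hx₁
  have hu : u ≠ 0 := fun hu => hx₃₂ (by simp [hu])
  refine ⟨u, hu, ?_⟩
  have hμ0 : μ ≠ 0 := div_ne_zero (sub_ne_zero.2 hr₁₂) (sub_ne_zero.2 hr₃₄)
  have hμ1 : μ ≠ 1 := fun h => hx₁₂ (by rw [h, one_mul])
  have hμq : μ ^ p ^ m = μ := by
    rw [hμ, div_pow, sub_pow_expChar_pow, sub_pow_expChar_pow, hr₁, hr₂, hr₃, hr₄]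
  exact bmForm_pow_eq_self_of_affCollinear a b (s₂ := 1) hu hμ0
    one_ne_zero hμ1 hμq (one_pow _) hr₅ hr₁ hr₃ (by simpa only [one_mul] using hACE)

theorem bmForm_pow_ne_self [Fintype K] [CharP K 2] {m : ℕ} (hK : Fintype.card K = (2 ^ m) ^ 2)
    {a b : K} (ha : a ≠ 0) (hb : b + b ^ 2 ^ m ≠ 0)
    (hdisc : ∑ i ∈ range m, (a ^ (2 ^ m + 1) / (b + b ^ 2 ^ m) ^ 2) ^ 2 ^ i = 0)
    {u : K} (hu : u ≠ 0) : bmForm a b (2 ^ m) u ^ 2 ^ m ≠ bmForm a b (2 ^ m) u := by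
  intro hf
  have h2 : (2 : K) = 0 := CharTwo.two_eq_zero
  have hfrob : ∀ x : K, (x ^ 2 ^ m) ^ 2 ^ m = x := fun x => by
    rw [← pow_mul, ← sq, ← hK, FiniteField.pow_card]
  set c := b + b ^ 2 ^ m with hc
  have hcq : c ^ 2 ^ m = c := by rw [hc, add_pow_expChar_pow, hfrob, add_comm]
  set z := u ^ 2 ^ m / u with hz
  have hz0 : z ≠ 0 := div_ne_zero (pow_ne_zero _ hu) hu
  have hquad : a ^ 2 ^ m * z ^ 2 + c * z = a := by
    have hpow : (u ^ (2 ^ m + 1)) ^ 2 ^ m = u * u ^ 2 ^ m := by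
      rw [pow_succ, mul_pow, hfrob, mul_comm]
    simp only [bmForm, mul_pow, add_pow_expChar_pow, hpow] at hf
    rw [hz, hc]
    field_simp
    linear_combination hf + b * u * u ^ 2 ^ m * h2
  set t := a ^ 2 ^ m * z / c with ht
  have hts : t ^ 2 + t = a ^ (2 ^ m + 1) / c ^ 2 := by
    calc t ^ 2 + t = a ^ 2 ^ m * (a ^ 2 ^ m * z ^ 2 + c * z) / c ^ 2 := by
          rw [ht]; field_simp
      _ = a ^ (2 ^ m + 1) / c ^ 2 := by rw [hquad, pow_succ a]
  have htq : t ^ 2 ^ m = t := by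
    have htr := sum_range_pow_sub_self_pow (p := 2) t m
    rw [CharTwo.sub_eq_add, hts, hdisc] at htr
    exact (sub_eq_zero.1 htr.symm)
  have hnorm : z ^ 2 ^ m * z = 1 := by
    rw [hz, div_pow, hfrob]
    field_simp
  have hzt : z = c * t / a ^ 2 ^ m := by
    rw [ht]; field_simp
  have hct : c ^ 2 * t ^ 2 = a ^ (2 ^ m + 1) := by
    rw [hzt, div_pow, mul_pow, hcq, htq, hfrob] at hnorm
    field_simp at hnorm
    linear_combination hnorm
  have ht0 : t = 0 := by
    have : t ^ 2 + t = t ^ 2 := by rw [hts, ← hct]; field_simp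
    linear_combination this
  exact hz0 (by rw [hzt, ht0, mul_zero, zero_div])

end BuekenhoutMetz

theorem fano_bm_stmt12_general (m : ℕ) (K : Type) [Field K] [Fintype K]
    [DecidableEq K] (hK : Fintype.card K = (2 ^ m) ^ 2)
    (a b : K) (ha : a ≠ 0) (hb : b + b ^ (2 ^ m) ≠ 0)
    (hdisc : ∑ i ∈ Finset.range m,
        (a ^ (2 ^ m + 1) / (b + b ^ (2 ^ m)) ^ 2) ^ (2 ^ i) = 0)
    (P : Fin 7 → Fin 3 → K) (L : Fin 7 → Fin 3 → K)
    (hL0 : ∀ i, L i ≠ 0)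
    (hPdist : ∀ j j' : Fin 7, (∃ c : K, c ≠ 0 ∧ P j = c • P j') → j = j')
    (hLdist : ∀ i i' : Fin 7, (∃ c : K, c ≠ 0 ∧ L i = c • L i') → i = i')
    (hline3 : ∀ i : Fin 7,
      (Finset.univ.filter (fun j : Fin 7 => ∑ t, L i t * P j t = 0)).card = 3)
    (hcover : ∀ j j' : Fin 7, j ≠ j' →
      ∃ i : Fin 7, (∑ t, L i t * P j t = 0) ∧ (∑ t, L i t * P j' t = 0))
    (hU : ∀ j : Fin 7,
      (∃ c x r : K, c ≠ 0 ∧ r ^ (2 ^ m) = r ∧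
          P j = c • ![x, a * x ^ 2 + b * x ^ (2 ^ m + 1) + r, 1]) ∨
      (∃ c : K, c ≠ 0 ∧ P j = c • ![0, 1, 0])) :
    ∀ j : Fin 7, ¬ ∃ c : K, c ≠ 0 ∧ P j = c • ![(0 : K), 1, 0] := by
  rintro j₀ ⟨c₀, hc₀, hPj₀⟩
  have : CharP K 2 := charP_of_card_eq_prime_pow (hK.trans (pow_mul 2 m 2).symm)
  have haff (j : Fin 7) : ∃ c x r : K, c ≠ 0 ∧ r ^ 2 ^ m = r ∧
      (j ≠ j₀ → P j = c • ![x, bmForm a b (2 ^ m) x + r, 1]) := by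
    rcases hU j with ⟨c, x, r, hc, hr, hP⟩ | ⟨c, hc, hP⟩
    · exact ⟨c, x, r, hc, hr, fun _ => hP⟩
    · refine ⟨1, 0, 0, one_ne_zero, zero_pow (by positivity), fun hj => absurd ?_ hj⟩
      exact hPdist j j₀ ⟨c / c₀, div_ne_zero hc hc₀, by
        rw [hP, hPj₀, smul_smul, div_mul_cancel₀ _ hc₀]⟩
  choose c x r hc hr hP using haff
  obtain ⟨A, B, C, D, E, hXAB, hXCD, hAB, hCD, hXAC, hXEC, hACE, hBDE⟩ :=
    exists_onan_of_fano_through_point_at_infinity P L (Fintype.card_fin 7) hL0 hPdist hLdist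
      hline3 hcover hc₀ hPj₀ c (fun j => (x j, bmForm a b (2 ^ m) (x j) + r j)) hc hP
  dsimp only at hXAB hXCD hAB hCD hXAC hXEC hACE hBDE
  rw [← hXAB, ← hXCD] at hBDE
  obtain ⟨u, hu, hfu⟩ := exists_bmForm_pow_eq_self_of_onan a b (hr A) (hr B) (hr C) (hr D) (hr E)
    hXAC hXEC (fun h => hAB (by rw [hXAB, h])) (fun h => hCD (by rw [hXCD, h])) hACE hBDE
  exact bmForm_pow_ne_self hK ha hb hdisc hu hfu

/-- Let `q = 2^m > 2` and let `U = U_{a,b}` be an orthogonal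
Buekenhout–Metz unital in `PG(2, q²)` (so the discriminant
`d = a^{q+1}/(b+b^q)²` has absolute trace 0), with special point
`T_∞ = (0,1,0)`.  If seven points of `U` together with seven lines form a
Fano plane (points and lines pairwise distinct as projective objects, each
line meeting the seven points in exactly 3 of them, every two of the points
on one of the lines), then `T_∞` is not among the seven points. -/
theorem fano_bm_stmt12 (m : ℕ) (hm : 2 ≤ m) (K : Type) [Field K] [Fintype K]
    [DecidableEq K] (hK : Fintype.card K = (2 ^ m) ^ 2)
    (a b : K) (ha : a ≠ 0) (hb : b + b ^ (2 ^ m) ≠ 0)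
    (hdisc : ∑ i ∈ Finset.range m,
        (a ^ (2 ^ m + 1) / (b + b ^ (2 ^ m)) ^ 2) ^ (2 ^ i) = 0)
    (P : Fin 7 → Fin 3 → K) (L : Fin 7 → Fin 3 → K)
    (hP0 : ∀ j, P j ≠ 0) (hL0 : ∀ i, L i ≠ 0)
    (hPdist : ∀ j j' : Fin 7, (∃ c : K, c ≠ 0 ∧ P j = c • P j') → j = j')
    (hLdist : ∀ i i' : Fin 7, (∃ c : K, c ≠ 0 ∧ L i = c • L i') → i = i')
    (hline3 : ∀ i : Fin 7,
      (Finset.univ.filter (fun j : Fin 7 => ∑ t, L i t * P j t = 0)).card = 3)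
    (hcover : ∀ j j' : Fin 7, j ≠ j' →
      ∃ i : Fin 7, (∑ t, L i t * P j t = 0) ∧ (∑ t, L i t * P j' t = 0))
    (hU : ∀ j : Fin 7,
      (∃ c x r : K, c ≠ 0 ∧ r ^ (2 ^ m) = r ∧
          P j = c • ![x, a * x ^ 2 + b * x ^ (2 ^ m + 1) + r, 1]) ∨
      (∃ c : K, c ≠ 0 ∧ P j = c • ![0, 1, 0])) :
    ∀ j : Fin 7, ¬ ∃ c : K, c ≠ 0 ∧ P j = c • ![(0 : K), 1, 0] :=
  fano_bm_stmt12_general m K hK a b ha hb hdisc P L hL0 hPdist hLdist hline3 hcover hU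
end

section
/- Let q = 2^m > 2, let s, t ∈ F_q* with s ≠ t, h ∈ F_{q²} with h ∉ {0,1} and s + ht ≠ 0, and let θ ∈ F_{q²}*. Suppose k, k' ∈ F_{q²} and b₁, b₁' ∈ F_q satisfy Tr((θh)²) + b₁(θh)^{q+1} = Tr(kh), Tr(θ²) + b₁θ^{q+1} = Tr(k), Tr((θh)²) + b₁'(θh)^{q+1} = Tr(k'h), Tr(θ²) + b₁'θ^{q+1} = Tr(k'), where Tr(x) = x + x^q. Set W = h(s+t)/(s+ht). Then (k + k')W + (k^q + (k')^q)W^q = (b₁ + b₁') θ^{q+1} W^{q+1}. -/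
/-!
Write `σ` for the Frobenius `x ↦ x^q`. Summing the trace equations for `k` and `k'` in characteristic 2
shows that `x = 1` and `x = h` both satisfy `Tr(u x) = c x^{q+1}` with `u = k + k'`, `c = (b₁ + b₁') θ^{q+1}`.
For `x ≠ 0`, dividing by `x^{q+1}` turns this into `Tr(u σ(x⁻¹)) = c`, a condition on `x⁻¹` that is affine
over the fixed field of `σ`. Since `W⁻¹ = s/(s+t) · h⁻¹ + t/(s+t) · 1⁻¹` is an affine combination with
coefficients in `F_q`, `W` satisfies the equation as well.
-/

section TraceEquation

variable {K : Type*} [Field K] (σ : K →+* K)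

def SatisfiesTraceEq (u c x : K) : Prop :=
  u * x + σ u * σ x = c * (σ x * x)

variable {σ}

theorem satisfiesTraceEq_zero (u c : K) : SatisfiesTraceEq σ u c 0 := by
  simp [SatisfiesTraceEq]

theorem satisfiesTraceEq_iff_inv {u c x : K} (hx : x ≠ 0) :
    SatisfiesTraceEq σ u c x ↔ u * σ x⁻¹ + σ u * x⁻¹ = c := by
  have hσx : σ x ≠ 0 := (map_ne_zero σ).mpr hx
  rw [SatisfiesTraceEq, map_inv₀]
  constructor
  · intro h
    field_simp
    linear_combination h
  · intro h
    rw [← h]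
    field_simp

theorem SatisfiesTraceEq.inv_affine {u c x y a b : K} (hx : SatisfiesTraceEq σ u c x)
    (hy : SatisfiesTraceEq σ u c y) (hx0 : x ≠ 0) (hy0 : y ≠ 0) (ha : σ a = a) (hb : σ b = b)
    (hab : a + b = 1) : SatisfiesTraceEq σ u c (a * x⁻¹ + b * y⁻¹)⁻¹ := by
  by_cases hz : a * x⁻¹ + b * y⁻¹ = 0
  · rw [hz, inv_zero]
    exact satisfiesTraceEq_zero u c
  rw [satisfiesTraceEq_iff_inv hx0] at hx
  rw [satisfiesTraceEq_iff_inv hy0] at hy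
  rw [satisfiesTraceEq_iff_inv (inv_ne_zero hz), inv_inv, map_add, map_mul, map_mul, ha, hb]
  linear_combination a * hx + b * hy + c * hab

end TraceEquation

theorem fano_bm_stmt16_general (m : ℕ) (K : Type) [Field K] [Fintype K]
    (hK : Fintype.card K = (2 ^ m) ^ 2) (s t h θ k k' b₁ b₁' : K)
    (hsF : s ^ (2 ^ m) = s) (htF : t ^ (2 ^ m) = t)
    (e1 : (θ * h) ^ 2 + ((θ * h) ^ 2) ^ (2 ^ m) + b₁ * (θ * h) ^ (2 ^ m + 1)
        = k * h + (k * h) ^ (2 ^ m))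
    (e2 : θ ^ 2 + (θ ^ 2) ^ (2 ^ m) + b₁ * θ ^ (2 ^ m + 1)
        = k + k ^ (2 ^ m))
    (e3 : (θ * h) ^ 2 + ((θ * h) ^ 2) ^ (2 ^ m) + b₁' * (θ * h) ^ (2 ^ m + 1)
        = k' * h + (k' * h) ^ (2 ^ m))
    (e4 : θ ^ 2 + (θ ^ 2) ^ (2 ^ m) + b₁' * θ ^ (2 ^ m + 1)
        = k' + k' ^ (2 ^ m)) :
    (k + k') * (h * (s + t) / (s + h * t))
      + (k ^ (2 ^ m) + k' ^ (2 ^ m)) * (h * (s + t) / (s + h * t)) ^ (2 ^ m)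
      = (b₁ + b₁') * θ ^ (2 ^ m + 1)
          * (h * (s + t) / (s + h * t)) ^ (2 ^ m + 1) := by
  have : CharP K 2 := charP_of_card_eq_prime_pow (hK.trans (pow_mul 2 m 2).symm)
  have two : (2 : K) = 0 := CharTwo.two_eq_zero
  set σ := iterateFrobenius K 2 m
  have hσ (x : K) : x ^ 2 ^ m = σ x := rfl
  simp only [hσ, ← map_add, pow_succ _ (2 ^ m), map_mul] at e1 e2 e3 e4 hsF htF ⊢
  set W := h * (s + t) / (s + h * t)
  have h1 : SatisfiesTraceEq σ (k + k') ((b₁ + b₁') * (σ θ * θ)) 1 := by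
    rw [SatisfiesTraceEq, map_one, map_add]
    linear_combination -e2 - e4 + (θ ^ 2 + σ (θ ^ 2)) * two
  have hh : SatisfiesTraceEq σ (k + k') ((b₁ + b₁') * (σ θ * θ)) h := by
    rw [SatisfiesTraceEq, map_add]
    linear_combination -e1 - e3 + ((θ * h) ^ 2 + σ ((θ * h) ^ 2)) * two
  show SatisfiesTraceEq σ (k + k') ((b₁ + b₁') * (σ θ * θ)) W
  rcases eq_or_ne W 0 with hW | hW
  · rw [hW]
    exact satisfiesTraceEq_zero _ _
  obtain ⟨⟨hh0, hst⟩, hden⟩ : (h ≠ 0 ∧ s + t ≠ 0) ∧ s + h * t ≠ 0 := by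
    simpa [W, not_or] using hW
  have hW_eq : W = (s / (s + t) * h⁻¹ + t / (s + t) * 1⁻¹)⁻¹ := by
    field_simp [W]
    ring
  rw [hW_eq]
  refine hh.inv_affine h1 hh0 one_ne_zero ?_ ?_ ?_
  · rw [map_div₀, map_add, hsF, htF]
  · rw [map_div₀, map_add, hsF, htF]
  · field_simp

/-- key identity: Let `q = 2^m > 2`, `s, t ∈ F_q*`, `s ≠ t`,
`h ∉ {0,1}` with `s + ht ≠ 0`, `θ ∈ F_{q²}*`, and suppose `k, k' ∈ F_{q²}`,
`b₁, b₁' ∈ F_q` satisfy the four trace equations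
`Tr((θh)²) + b₁(θh)^{q+1} = Tr(kh)`, `Tr(θ²) + b₁θ^{q+1} = Tr(k)`,
`Tr((θh)²) + b₁'(θh)^{q+1} = Tr(k'h)`, `Tr(θ²) + b₁'θ^{q+1} = Tr(k')`,
with `Tr(x) = x + x^q`.  Then for `W = h(s+t)/(s+ht)` one has
`(k + k')W + (k^q + (k')^q)W^q = (b₁ + b₁') θ^{q+1} W^{q+1}`. -/
theorem fano_bm_stmt16 (m : ℕ) (hm : 2 ≤ m) (K : Type) [Field K] [Fintype K]
    (hK : Fintype.card K = (2 ^ m) ^ 2) (s t h θ k k' b₁ b₁' : K)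
    (hs : s ≠ 0) (ht : t ≠ 0) (hst : s ≠ t)
    (hsF : s ^ (2 ^ m) = s) (htF : t ^ (2 ^ m) = t)
    (hh0 : h ≠ 0) (hh1 : h ≠ 1) (hden : s + h * t ≠ 0) (hθ : θ ≠ 0)
    (hb₁ : b₁ ^ (2 ^ m) = b₁) (hb₁' : b₁' ^ (2 ^ m) = b₁')
    (e1 : (θ * h) ^ 2 + ((θ * h) ^ 2) ^ (2 ^ m) + b₁ * (θ * h) ^ (2 ^ m + 1)
        = k * h + (k * h) ^ (2 ^ m))
    (e2 : θ ^ 2 + (θ ^ 2) ^ (2 ^ m) + b₁ * θ ^ (2 ^ m + 1)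
        = k + k ^ (2 ^ m))
    (e3 : (θ * h) ^ 2 + ((θ * h) ^ 2) ^ (2 ^ m) + b₁' * (θ * h) ^ (2 ^ m + 1)
        = k' * h + (k' * h) ^ (2 ^ m))
    (e4 : θ ^ 2 + (θ ^ 2) ^ (2 ^ m) + b₁' * θ ^ (2 ^ m + 1)
        = k' + k' ^ (2 ^ m)) :
    (k + k') * (h * (s + t) / (s + h * t))
      + (k ^ (2 ^ m) + k' ^ (2 ^ m)) * (h * (s + t) / (s + h * t)) ^ (2 ^ m)
      = (b₁ + b₁') * θ ^ (2 ^ m + 1)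
          * (h * (s + t) / (s + h * t)) ^ (2 ^ m + 1) :=
  fano_bm_stmt16_general m K hK s t h θ k k' b₁ b₁' hsF htF e1 e2 e3 e4
end
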